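/- Let G be a connected graph of order n with minimum degree δ ≥ 3. Then γ^t_StR(G) ≤ n − ⌊(diam(G)+1)/3⌋. -/

import Mathlib

open Finset

variable {V : Type*} [Fintype V]

/-- The degree of a vertex. -/
noncomputable def degN (G : SimpleGraph V) (v : V) : ℕ := {u | G.Adj v u}.ncard

/-- Maximum degree. -/
noncomputable def maxDeg (G : SimpleGraph V) : ℕ := Finset.univ.sup (degN G)

/-- Minimum degree. -/
noncomputable def minDeg (G : SimpleGraph V) : ℕ := sInf {d | ∃ v, degN G v = d}

/-- No isolated vertex. -/
def NoIsolated (G : SimpleGraph V) : Prop := ∀ v, ∃ u, G.Adj v u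

/-- Total strong Roman dominating function. `(Δ+1)/2 = ⌈Δ/2⌉` and
`(m+1)/2 = ⌈m/2⌉` in natural-number arithmetic. -/
def IsTSRDF (G : SimpleGraph V) (f : V → ℕ) : Prop :=
  (∀ v, f v ≤ (maxDeg G + 1) / 2 + 1) ∧
  (∀ v, f v = 0 → ∃ u, G.Adj v u ∧
      1 + ({w | G.Adj u w ∧ f w = 0}.ncard + 1) / 2 ≤ f u) ∧
  (∀ v, 0 < f v → ∃ u, G.Adj v u ∧ 0 < f u)

/-- The total strong Roman domination number. -/
noncomputable def tsrd (G : SimpleGraph V) : ℕ :=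
  sInf {k | ∃ f : V → ℕ, IsTSRDF G f ∧ ∑ v, f v = k}

/-! Label the first `3k` vertices of a diametral geodesic, `k = ⌊(diam + 1) / 3⌋`, by
`0, 2, 0, 0, 2, 0, …` and all other vertices by `1`; the weight is `n - k`. The neighbours of a
vertex occupy at most three consecutive positions of a geodesic, so every vertex has at most two
neighbours labelled `0`. Hence each `2` strongly dominates its zero neighbours, and since `δ ≥ 3`
every vertex has a positively labelled neighbour. -/

section GeodesicLabel

variable {α : Type*} {G : SimpleGraph α}

lemma minDeg_le_degN (v : α) : minDeg G ≤ degN G v := Nat.sInf_le ⟨v, rfl⟩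

lemma degN_le_maxDeg [Fintype α] (v : α) : degN G v ≤ maxDeg G := le_sup (mem_univ v)

lemma sum_range_ite_mod_three_eq_one (k : ℕ) :
    ∑ i ∈ range (3 * k), (if i % 3 = 1 then 2 else 0) = 2 * k := by
  induction k with
  | zero => rfl
  | succ k ih =>
    rw [show 3 * (k + 1) = 3 * k + 1 + 1 + 1 by ring, sum_range_succ, sum_range_succ,
      sum_range_succ, ih]
    split_ifs <;> omega

namespace SimpleGraph.Walk

variable {a b : α} {p : G.Walk a b}

lemma dist_getVert_of_length_eq_dist (hp : p.length = G.dist a b) {i : ℕ} (hi : i ≤ p.length) :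
    G.dist a (p.getVert i) = i := by
  have h_take : G.dist a (p.getVert i) ≤ i := by simpa [hi] using dist_le (p.take i)
  have h_drop : G.dist (p.getVert i) b ≤ p.length - i := by simpa using dist_le (p.drop i)
  have := (p.take i).reachable.dist_triangle_left b
  omega

variable [DecidableEq α]

/-- On a geodesic the position of a vertex is its distance from `a`, so this labels the first
`3 * k` vertices of `p` by `0, 2, 0, 0, 2, 0, …` and all other vertices by `1`. -/
noncomputable def geodesicLabel (p : G.Walk a b) (k : ℕ) (x : α) : ℕ :=
  if x ∈ (range (3 * k)).image p.getVert then if G.dist a x % 3 = 1 then 2 else 0 else 1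

variable {k : ℕ}

lemma geodesicLabel_le_two (x : α) : p.geodesicLabel k x ≤ 2 := by
  unfold geodesicLabel
  split_ifs <;> omega

lemma geodesicLabel_getVert (hp : p.length = G.dist a b) (hk : 3 * k ≤ p.length + 1) {i : ℕ}
    (hi : i < 3 * k) : p.geodesicLabel k (p.getVert i) = if i % 3 = 1 then 2 else 0 := by
  rw [geodesicLabel, if_pos (mem_image_of_mem _ (mem_range.2 hi)),
    dist_getVert_of_length_eq_dist hp (by omega)]

lemma geodesicLabel_of_notMem {x : α} (hx : x ∉ (range (3 * k)).image p.getVert) :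
    p.geodesicLabel k x = 1 := if_neg hx

lemma exists_of_geodesicLabel_eq_zero (hp : p.length = G.dist a b) (hk : 3 * k ≤ p.length + 1)
    {x : α} (hx : p.geodesicLabel k x = 0) : ∃ i < 3 * k, i % 3 ≠ 1 ∧ p.getVert i = x := by
  obtain ⟨i, hi, rfl⟩ := mem_image.1 (of_not_not fun hS => by
    rw [geodesicLabel_of_notMem hS] at hx; exact one_ne_zero hx)
  rw [geodesicLabel_getVert hp hk (mem_range.1 hi)] at hx
  exact ⟨i, mem_range.1 hi, fun h => by simp [h] at hx, rfl⟩

lemma exists_adj_geodesicLabel_eq_two (hp : p.length = G.dist a b) (hk : 3 * k ≤ p.length + 1)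
    {x : α} (hx : p.geodesicLabel k x = 0) : ∃ u, G.Adj x u ∧ p.geodesicLabel k u = 2 := by
  obtain ⟨i, hi, hmod, rfl⟩ := exists_of_geodesicLabel_eq_zero hp hk hx
  have h_label (j : ℕ) (hj : j < 3 * k) (hj' : j % 3 = 1) : p.geodesicLabel k (p.getVert j) = 2 := by
    rw [geodesicLabel_getVert hp hk hj, if_pos hj']
  rcases (by omega : i % 3 = 0 ∨ i % 3 = 2) with h | h
  · exact ⟨_, p.adj_getVert_succ (by omega), h_label (i + 1) (by omega) (by omega)⟩
  · obtain ⟨j, rfl⟩ : ∃ j, i = j + 1 := ⟨i - 1, by omega⟩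
    exact ⟨_, (p.adj_getVert_succ (by omega)).symm, h_label j (by omega) (by omega)⟩

lemma finite_setOf_geodesicLabel_eq_zero : {w | p.geodesicLabel k w = 0}.Finite :=
  ((range (3 * k)).image p.getVert).finite_toSet.subset fun _ hw =>
    of_not_not fun hS => one_ne_zero ((geodesicLabel_of_notMem hS).symm.trans hw)

lemma ncard_adj_geodesicLabel_eq_zero_le_two (hp : p.length = G.dist a b)
    (hk : 3 * k ≤ p.length + 1) (x : α) :
    {w | G.Adj x w ∧ p.geodesicLabel k w = 0}.ncard ≤ 2 := by
  have h_finite : {w | G.Adj x w ∧ p.geodesicLabel k w = 0}.Finite :=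
    finite_setOf_geodesicLabel_eq_zero.subset fun _ hw => hw.2
  have h_position {w : α} (hw : G.Adj x w ∧ p.geodesicLabel k w = 0) :
      ∃ i, p.getVert i = w ∧ i % 3 ≠ 1 ∧
        (i = G.dist a x ∨ i = G.dist a x + 1 ∨ i = G.dist a x - 1) := by
    obtain ⟨i, hi, hmod, rfl⟩ := exists_of_geodesicLabel_eq_zero hp hk hw.2
    have h_dist := dist_getVert_of_length_eq_dist hp (i := i) (by omega)
    exact ⟨i, rfl, hmod, h_dist ▸ hw.1.diff_dist_adj⟩
  by_contra! h_three
  obtain ⟨w₁, w₂, w₃, h₁, h₂, h₃, h₁₂, h₁₃, h₂₃⟩ := (Set.two_lt_ncard_iff h_finite).1 h_three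
  obtain ⟨i₁, rfl, hm₁, hx₁⟩ := h_position h₁
  obtain ⟨i₂, rfl, hm₂, hx₂⟩ := h_position h₂
  obtain ⟨i₃, rfl, hm₃, hx₃⟩ := h_position h₃
  have := mt (congrArg p.getVert) h₁₂
  have := mt (congrArg p.getVert) h₁₃
  have := mt (congrArg p.getVert) h₂₃
  omega

lemma exists_adj_geodesicLabel_pos (hδ : 3 ≤ minDeg G) (hp : p.length = G.dist a b)
    (hk : 3 * k ≤ p.length + 1) (x : α) : ∃ u, G.Adj x u ∧ 0 < p.geodesicLabel k u := by
  by_contra! h_zero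
  have h_sub : {u | G.Adj x u} ⊆ {w | G.Adj x w ∧ p.geodesicLabel k w = 0} :=
    fun u hu => ⟨hu, Nat.le_zero.1 (h_zero u hu)⟩
  have := Set.ncard_le_ncard h_sub (finite_setOf_geodesicLabel_eq_zero.subset fun _ hw => hw.2)
  have := ncard_adj_geodesicLabel_eq_zero_le_two hp hk x
  have := (minDeg_le_degN x).trans' hδ
  unfold degN at this
  omega

lemma isTSRDF_geodesicLabel [Fintype α] (hδ : 3 ≤ minDeg G) (hp : p.length = G.dist a b)
    (hk : 3 * k ≤ p.length + 1) : IsTSRDF G (p.geodesicLabel k) := by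
  refine ⟨fun x => ?_, fun x hx => ?_, fun x _ => exists_adj_geodesicLabel_pos hδ hp hk x⟩
  · have := geodesicLabel_le_two (p := p) (k := k) x
    have := (degN_le_maxDeg x).trans' ((minDeg_le_degN (G := G) x).trans' hδ)
    omega
  · obtain ⟨u, hxu, hu⟩ := exists_adj_geodesicLabel_eq_two hp hk hx
    have := ncard_adj_geodesicLabel_eq_zero_le_two hp hk u
    exact ⟨u, hxu, by omega⟩

lemma sum_geodesicLabel [Fintype α] (hp : p.length = G.dist a b) (hk : 3 * k ≤ p.length + 1) :
    ∑ x, p.geodesicLabel k x = Fintype.card α - k := by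
  set S := (range (3 * k)).image p.getVert
  have h_inj : Set.InjOn p.getVert (range (3 * k)) :=
    (p.isPath_of_length_eq_dist hp).getVert_injOn.mono fun i hi => by
      simp only [coe_range, Set.mem_Iio] at hi; show i ≤ p.length; omega
  have h_card : S.card = 3 * k := by rw [card_image_of_injOn h_inj, card_range]
  have h_sum_S : ∑ x ∈ S, p.geodesicLabel k x = 2 * k := by
    rw [sum_image h_inj, ← sum_range_ite_mod_three_eq_one k]
    exact sum_congr rfl fun i hi => geodesicLabel_getVert hp hk (mem_range.1 hi)
  have h_sum_compl : ∑ x ∈ Sᶜ, p.geodesicLabel k x = Fintype.card α - 3 * k := by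
    rw [sum_congr rfl fun x hx => geodesicLabel_of_notMem (mem_compl.1 hx), sum_const,
      card_compl, h_card, smul_eq_mul, mul_one]
  have := h_card ▸ card_le_univ S
  rw [← sum_add_sum_compl S, h_sum_S, h_sum_compl]
  omega

lemma tsrd_le_card_sub [Fintype α] (hδ : 3 ≤ minDeg G) (hp : p.length = G.dist a b)
    (hk : 3 * k ≤ p.length + 1) : tsrd G ≤ Fintype.card α - k :=
  Nat.sInf_le ⟨_, isTSRDF_geodesicLabel hδ hp hk, sum_geodesicLabel hp hk⟩

end SimpleGraph.Walk

end GeodesicLabel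

theorem stmt7 (G : SimpleGraph V) (hc : G.Connected) (hδ : 3 ≤ minDeg G) :
    tsrd G ≤ Fintype.card V - (G.diam + 1) / 3 := by
  classical
  have := hc.nonempty
  obtain ⟨a, b, hab⟩ := G.exists_dist_eq_diam
  obtain ⟨p, hp⟩ := hc.exists_walk_length_eq_dist a b
  exact p.tsrd_le_card_sub hδ hp (by omega)
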